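/- arXiv:math/9810038 — 3 statements merged into one kernel-verified Lean document; each statement's English description precedes it below -/
import Mathlib

section
/- Let (B, C, ▷, ◁) be a matched pair of Hopf algebras over a field k (as in the previous context). Then the tensor product coalgebra structure Δ(b ⊗ c) = (b₍₁₎ ⊗ c₍₁₎) ⊗ (b₍₂₎ ⊗ c₍₂₎), ε(b ⊗ c) = ε(b)ε(c) on B ⊗ C makes the double cross product B ⋈ C (with product (b ⊗ c)(b' ⊗ c') = b (c₍₁₎ ▷ b'₍₁₎) ⊗ (c₍₂₎ ◁ b'₍₂₎) c') into a bialgebra: Δ is an algebra homomorphism from B ⋈ C to (B ⋈ C) ⊗ (B ⋈ C), and ε is an algebra homomorphism. -/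
open TensorProduct

variable (k B C : Type*) [CommRing k] [Ring B] [HopfAlgebra k B] [Ring C] [HopfAlgebra k C]

/-- A matched pair of (bi/Hopf) algebras `(B, C, ▷, ◁)`:
`lact : C ⊗ B →ₗ B` is a left action making `B` a left `C`-module coalgebra,
`ract : C ⊗ B →ₗ C` is a right action making `C` a right `B`-module coalgebra,
together with the compatibility conditions of Proposition 4.1. -/
structure MatchedPair (lact : C ⊗[k] B →ₗ[k] B) (ract : C ⊗[k] B →ₗ[k] C) : Prop where
  /-- `1 ▷ b = b` -/
  lact_one : ∀ b : B, lact ((1 : C) ⊗ₜ[k] b) = b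
  /-- `(c c') ▷ b = c ▷ (c' ▷ b)` -/
  lact_act : lact ∘ₗ TensorProduct.map (LinearMap.mul' k C) LinearMap.id
    = lact ∘ₗ (TensorProduct.map LinearMap.id lact) ∘ₗ (TensorProduct.assoc k C C B).toLinearMap
  /-- `Δ(c ▷ b) = (c₁ ▷ b₁) ⊗ (c₂ ▷ b₂)` -/
  lact_comul : Coalgebra.comul ∘ₗ lact
    = (TensorProduct.map lact lact) ∘ₗ (TensorProduct.tensorTensorTensorComm k C C B B).toLinearMap
        ∘ₗ TensorProduct.map Coalgebra.comul Coalgebra.comul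
  /-- `ε(c ▷ b) = ε(c) ε(b)` -/
  lact_counit : Coalgebra.counit ∘ₗ lact
    = (TensorProduct.lid k k).toLinearMap ∘ₗ TensorProduct.map Coalgebra.counit Coalgebra.counit
  /-- `c ▷ 1 = ε(c) 1` -/
  lact_triv : ∀ c : C, lact (c ⊗ₜ[k] (1 : B)) = (Coalgebra.counit (R := k) c) • (1 : B)
  /-- `c ◁ 1 = c` -/
  ract_one : ∀ c : C, ract (c ⊗ₜ[k] (1 : B)) = c
  /-- `(c ◁ b) ◁ b' = c ◁ (b b')` -/
  ract_act : ract ∘ₗ (TensorProduct.map ract LinearMap.id) ∘ₗ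
      (TensorProduct.assoc k C B B).symm.toLinearMap
    = ract ∘ₗ TensorProduct.map LinearMap.id (LinearMap.mul' k B)
  /-- `Δ(c ◁ b) = (c₁ ◁ b₁) ⊗ (c₂ ◁ b₂)` -/
  ract_comul : Coalgebra.comul ∘ₗ ract
    = (TensorProduct.map ract ract) ∘ₗ (TensorProduct.tensorTensorTensorComm k C C B B).toLinearMap
        ∘ₗ TensorProduct.map Coalgebra.comul Coalgebra.comul
  /-- `ε(c ◁ b) = ε(c) ε(b)` -/
  ract_counit : Coalgebra.counit ∘ₗ ract
    = (TensorProduct.lid k k).toLinearMap ∘ₗ TensorProduct.map Coalgebra.counit Coalgebra.counit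
  /-- `1 ◁ b = ε(b) 1` -/
  ract_triv : ∀ b : B, ract ((1 : C) ⊗ₜ[k] b) = (Coalgebra.counit (R := k) b) • (1 : C)
  /-- `c ▷ (b b') = (c₁ ▷ b₁)((c₂ ◁ b₂) ▷ b')` -/
  comp_left : lact ∘ₗ TensorProduct.map LinearMap.id (LinearMap.mul' k B)
    = (LinearMap.mul' k B) ∘ₗ
      (TensorProduct.map lact (lact ∘ₗ TensorProduct.map ract LinearMap.id)) ∘ₗ
      (TensorProduct.assoc k (C ⊗[k] B) (C ⊗[k] B) B).toLinearMap ∘ₗ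
      (TensorProduct.map (TensorProduct.tensorTensorTensorComm k C C B B).toLinearMap
        LinearMap.id) ∘ₗ
      (TensorProduct.assoc k (C ⊗[k] C) (B ⊗[k] B) B).symm.toLinearMap ∘ₗ
      (TensorProduct.map LinearMap.id (TensorProduct.map Coalgebra.comul LinearMap.id)) ∘ₗ
      (TensorProduct.map Coalgebra.comul LinearMap.id)
  /-- `(c c') ◁ b = (c ◁ (c'₁ ▷ b₁))(c'₂ ◁ b₂)` -/
  comp_right : ract ∘ₗ TensorProduct.map (LinearMap.mul' k C) LinearMap.id
    = (LinearMap.mul' k C) ∘ₗ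
      (TensorProduct.map ract LinearMap.id) ∘ₗ
      (TensorProduct.assoc k C B C).symm.toLinearMap ∘ₗ
      (TensorProduct.map LinearMap.id (TensorProduct.map lact ract)) ∘ₗ
      (TensorProduct.map LinearMap.id
        (TensorProduct.tensorTensorTensorComm k C C B B).toLinearMap) ∘ₗ
      (TensorProduct.assoc k C (C ⊗[k] C) (B ⊗[k] B)).toLinearMap ∘ₗ
      (TensorProduct.map (TensorProduct.map LinearMap.id Coalgebra.comul) LinearMap.id) ∘ₗ
      (TensorProduct.map LinearMap.id Coalgebra.comul)
  /-- `(c₁ ◁ b₁) ⊗ (c₂ ▷ b₂) = (c₂ ◁ b₂) ⊗ (c₁ ▷ b₁)` -/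
  comp_mid : (TensorProduct.map ract lact) ∘ₗ
      (TensorProduct.tensorTensorTensorComm k C C B B).toLinearMap ∘ₗ
      TensorProduct.map Coalgebra.comul Coalgebra.comul
    = (TensorProduct.map ract lact) ∘ₗ
      (TensorProduct.comm k (C ⊗[k] B) (C ⊗[k] B)).toLinearMap ∘ₗ
      (TensorProduct.tensorTensorTensorComm k C C B B).toLinearMap ∘ₗ
      TensorProduct.map Coalgebra.comul Coalgebra.comul

/-- The double cross product multiplication on `B ⊗ C`:
`(b ⊗ c) ⊗ (b' ⊗ c') ↦ b (c₁ ▷ b'₁) ⊗ (c₂ ◁ b'₂) c'`. -/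
noncomputable def dcpMul (lact : C ⊗[k] B →ₗ[k] B) (ract : C ⊗[k] B →ₗ[k] C) :
    (B ⊗[k] C) ⊗[k] (B ⊗[k] C) →ₗ[k] B ⊗[k] C :=
  (TensorProduct.map (LinearMap.mul' k B) (LinearMap.mul' k C)) ∘ₗ
  (TensorProduct.assoc k B B (C ⊗[k] C)).symm.toLinearMap ∘ₗ
  (TensorProduct.map LinearMap.id (TensorProduct.assoc k B C C).toLinearMap) ∘ₗ
  (TensorProduct.map LinearMap.id
    (TensorProduct.map (TensorProduct.map lact ract) LinearMap.id)) ∘ₗ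
  (TensorProduct.map LinearMap.id
    (TensorProduct.map (TensorProduct.tensorTensorTensorComm k C C B B).toLinearMap
      LinearMap.id)) ∘ₗ
  (TensorProduct.map LinearMap.id
    (TensorProduct.assoc k (C ⊗[k] C) (B ⊗[k] B) C).symm.toLinearMap) ∘ₗ
  (TensorProduct.assoc k B (C ⊗[k] C) ((B ⊗[k] B) ⊗[k] C)).toLinearMap ∘ₗ
  (TensorProduct.map (TensorProduct.map LinearMap.id Coalgebra.comul)
    (TensorProduct.map Coalgebra.comul LinearMap.id))

/-- The tensor product comultiplication on `B ⊗ C`. -/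
noncomputable def tensorComulBC : B ⊗[k] C →ₗ[k] (B ⊗[k] C) ⊗[k] (B ⊗[k] C) :=
  (TensorProduct.tensorTensorTensorComm k B B C C).toLinearMap ∘ₗ
  TensorProduct.map Coalgebra.comul Coalgebra.comul

/-- The tensor product counit on `B ⊗ C`. -/
noncomputable def tensorCounitBC : B ⊗[k] C →ₗ[k] k :=
  (TensorProduct.lid k k).toLinearMap ∘ₗ
  TensorProduct.map Coalgebra.counit Coalgebra.counit

/-!
The product of `B ⋈ C` is `m_B ⊗ m_C` precomposed with `id_B ⊗ ψ ⊗ id_C` (up to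
reassociation), where `ψ (c ⊗ b) = (c₁ ▷ b₁) ⊗ (c₂ ◁ b₂)`. Multiplication of a bialgebra is a
coalgebra map, and so is `ψ = (▷ ⊗ ◁) ∘ Δ`: the actions are coalgebra maps, and the
compatibility `(c₁ ◁ b₁) ⊗ (c₂ ▷ b₂) = (c₂ ◁ b₂) ⊗ (c₁ ▷ b₁)` is exactly what is needed to
exchange the two middle Sweedler legs. Hence the product is a composite of coalgebra maps, which
says that `Δ` and `ε` are multiplicative.
-/

section MapComul

open Coalgebra

variable {R X Y Z : Type*} [CommSemiring R] [AddCommMonoid X] [Module R X] [Coalgebra R X]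
  [AddCommMonoid Y] [Module R Y] [Coalgebra R Y] [AddCommMonoid Z] [Module R Z] [Coalgebra R Z]

lemma TensorProduct.lid_comp_map_counit :
    (TensorProduct.lid R R).toLinearMap ∘ₗ map counit counit
      = counit (R := R) (A := Y ⊗[R] Z) := by
  ext
  simp [mul_comm]

/-- `x ↦ f x₁ ⊗ g x₂` is a coalgebra map as soon as `g x₁ ⊗ f x₂ = g x₂ ⊗ f x₁`. -/
noncomputable def CoalgHom.mapComul (f : X →ₗc[R] Y) (g : X →ₗc[R] Z)
    (h : map (g : X →ₗ[R] Z) (f : X →ₗ[R] Y) ∘ₗ (TensorProduct.comm R X X).toLinearMap ∘ₗ comul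
      = map (g : X →ₗ[R] Z) (f : X →ₗ[R] Y) ∘ₗ comul) :
    X →ₗc[R] Y ⊗[R] Z where
  toLinearMap := map (f : X →ₗ[R] Y) (g : X →ₗ[R] Z) ∘ₗ comul
  counit_comp := by
    rw [TensorProduct.counit_def]
    simp only [coassoc_simps, CoalgHomClass.counit_comp,
      CoassocSimps.map_counit_comp_comul_left]
    ext
    simp
  map_comp_comul := by
    -- both sides are `x ↦ (f x₁ ⊗ N (x₂ ⊗ x₃)) ⊗ g x₄`, for `N = g ⊗ f` resp. `(g ⊗ f) ∘ flip`
    calc _ = (TensorProduct.assoc R (Y ⊗[R] Z) Y Z).toLinearMap ∘ₗ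
          map ((TensorProduct.assoc R Y Z Y).symm.toLinearMap ∘ₗ
            map (f : X →ₗ[R] Y) (map (g : X →ₗ[R] Z) (f : X →ₗ[R] Y) ∘ₗ comul) ∘ₗ comul)
            (g : X →ₗ[R] Z) ∘ₗ comul := by
          simp only [coassoc_simps]
      _ = (TensorProduct.assoc R (Y ⊗[R] Z) Y Z).toLinearMap ∘ₗ
          map ((TensorProduct.assoc R Y Z Y).symm.toLinearMap ∘ₗ
            map (f : X →ₗ[R] Y) (map (g : X →ₗ[R] Z) (f : X →ₗ[R] Y) ∘ₗ
              (TensorProduct.comm R X X).toLinearMap ∘ₗ comul) ∘ₗ comul)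
            (g : X →ₗ[R] Z) ∘ₗ comul := by
          rw [h]
      _ = _ := by
          rw [TensorProduct.comul_def]
          simp only [coassoc_simps, ← CoalgHomClass.map_comp_comul]

end MapComul

namespace MatchedPair

variable {k B C} {lact : C ⊗[k] B →ₗ[k] B} {ract : C ⊗[k] B →ₗ[k] C}

noncomputable def lactCoalgHom (h : MatchedPair k B C lact ract) : C ⊗[k] B →ₗc[k] B where
  toLinearMap := lact
  counit_comp := h.lact_counit.trans TensorProduct.lid_comp_map_counit
  map_comp_comul := h.lact_comul.symm

noncomputable def ractCoalgHom (h : MatchedPair k B C lact ract) : C ⊗[k] B →ₗc[k] C where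
  toLinearMap := ract
  counit_comp := h.ract_counit.trans TensorProduct.lid_comp_map_counit
  map_comp_comul := h.ract_comul.symm

noncomputable def braiding (h : MatchedPair k B C lact ract) : C ⊗[k] B →ₗc[k] B ⊗[k] C :=
  CoalgHom.mapComul h.lactCoalgHom h.ractCoalgHom h.comp_mid.symm

noncomputable def dcpMulCoalgHom (h : MatchedPair k B C lact ract) :
    (B ⊗[k] C) ⊗[k] (B ⊗[k] C) →ₗc[k] B ⊗[k] C :=
  (Coalgebra.TensorProduct.map (Bialgebra.mulCoalgHom k B) (Bialgebra.mulCoalgHom k C)).comp <|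
  (Coalgebra.TensorProduct.assoc k k B B (C ⊗[k] C)).symm.toCoalgHom.comp <|
  (CoalgHom.lTensor B (Coalgebra.TensorProduct.assoc k k B C C).toCoalgHom).comp <|
  (CoalgHom.lTensor B (CoalgHom.rTensor C h.braiding)).comp <|
  (CoalgHom.lTensor B (Coalgebra.TensorProduct.assoc k k C B C).symm.toCoalgHom).comp
  (Coalgebra.TensorProduct.assoc k k B C (B ⊗[k] C)).toCoalgHom

lemma dcpMulCoalgHom_toLinearMap (h : MatchedPair k B C lact ract) :
    (h.dcpMulCoalgHom : (B ⊗[k] C) ⊗[k] (B ⊗[k] C) →ₗ[k] B ⊗[k] C) = dcpMul k B C lact ract := by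
  ext b c b' c'
  rfl

end MatchedPair

theorem dcp_bialgebra
    (lact : C ⊗[k] B →ₗ[k] B) (ract : C ⊗[k] B →ₗ[k] C)
    (h : MatchedPair k B C lact ract) :
    -- Δ is an algebra homomorphism B ⋈ C → (B ⋈ C) ⊗ (B ⋈ C)
    (tensorComulBC k B C ∘ₗ dcpMul k B C lact ract
      = (TensorProduct.map (dcpMul k B C lact ract) (dcpMul k B C lact ract)) ∘ₗ
        (TensorProduct.tensorTensorTensorComm k (B ⊗[k] C) (B ⊗[k] C)
          (B ⊗[k] C) (B ⊗[k] C)).toLinearMap ∘ₗ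
        TensorProduct.map (tensorComulBC k B C) (tensorComulBC k B C)) ∧
    (tensorComulBC k B C ((1 : B) ⊗ₜ[k] (1 : C))
      = ((1 : B) ⊗ₜ[k] (1 : C)) ⊗ₜ[k] ((1 : B) ⊗ₜ[k] (1 : C))) ∧
    -- ε is an algebra homomorphism
    (tensorCounitBC k B C ∘ₗ dcpMul k B C lact ract
      = (TensorProduct.lid k k).toLinearMap ∘ₗ
        TensorProduct.map (tensorCounitBC k B C) (tensorCounitBC k B C)) ∧
    (tensorCounitBC k B C ((1 : B) ⊗ₜ[k] (1 : C)) = 1) := by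
  have hcounit : tensorCounitBC k B C = Coalgebra.counit := TensorProduct.lid_comp_map_counit
  refine ⟨?_, ?_, ?_, ?_⟩
  · rw [← h.dcpMulCoalgHom_toLinearMap]
    exact h.dcpMulCoalgHom.map_comp_comul.symm
  · simp [tensorComulBC, Algebra.TensorProduct.one_def]
  · rw [← h.dcpMulCoalgHom_toLinearMap, hcounit, TensorProduct.lid_comp_map_counit]
    exact h.dcpMulCoalgHom.counit_comp
  · simp [hcounit]
end

section
/- Let R ∈ Mₙ(k) ⊗ Mₙ(k) be an invertible solution of the quantum Yang–Baxter equation R₁₂R₁₃R₂₃ = R₂₃R₁₃R₁₂ that is biinvertible (R and the 'second inverse' R̃ with R̃ᵃᵢᵇⱼ Rʲᵇₖᶜ = δᵃₖδᶜᵢ exist). Let B(R) be the braided matrix algebra with generators uⁱⱼ and relations R₂₁ u₁ R u₂ = u₂ R₂₁ u₁ R. Then the map Δ(uⁱⱼ) = Σₖ uⁱₖ ⊗ uᵏⱼ, extended as an algebra map to the braided tensor product B(R) ⊗̲ B(R) with cross relations R⁻¹ u₁' R u₂ = u₂ R⁻¹ u₁' R (u' the generators of the second factor), is a well-defined algebra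 homomorphism B(R) → B(R) ⊗̲ B(R), i.e. Δ(u) = u ⊗ u respects the reflection-equation relations. -/
open scoped Matrix

variable {k : Type*} [Field k] {n : ℕ}

/-- `u ⊗ I` (leg 1) of an `n × n` matrix with entries in an algebra. -/
def leg1 {A : Type*} [Ring A] (u : Matrix (Fin n) (Fin n) A) :
    Matrix (Fin n × Fin n) (Fin n × Fin n) A :=
  fun p q => if p.2 = q.2 then u p.1 q.1 else 0

/-- `I ⊗ u` (leg 2) of an `n × n` matrix with entries in an algebra. -/
def leg2 {A : Type*} [Ring A] (u : Matrix (Fin n) (Fin n) A) :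
    Matrix (Fin n × Fin n) (Fin n × Fin n) A :=
  fun p q => if p.1 = q.1 then u p.2 q.2 else 0

/-- `R₂₁ = τ(R)`. -/
def flip21 (R : Matrix (Fin n × Fin n) (Fin n × Fin n) k) :
    Matrix (Fin n × Fin n) (Fin n × Fin n) k :=
  fun p q => R (p.2, p.1) (q.2, q.1)

/-- Base change of a scalar matrix into an algebra. -/
def mapA (A : Type*) [Ring A] [Algebra k A]
    (R : Matrix (Fin n × Fin n) (Fin n × Fin n) k) :
    Matrix (Fin n × Fin n) (Fin n × Fin n) A :=
  R.map (algebraMap k A)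

/-- `R₁₂` acting on the triple tensor product. -/
def L12 (R : Matrix (Fin n × Fin n) (Fin n × Fin n) k) :
    Matrix (Fin n × Fin n × Fin n) (Fin n × Fin n × Fin n) k :=
  fun p q => if p.2.2 = q.2.2 then R (p.1, p.2.1) (q.1, q.2.1) else 0

/-- `R₁₃` acting on the triple tensor product. -/
def L13 (R : Matrix (Fin n × Fin n) (Fin n × Fin n) k) :
    Matrix (Fin n × Fin n × Fin n) (Fin n × Fin n × Fin n) k :=
  fun p q => if p.2.1 = q.2.1 then R (p.1, p.2.2) (q.1, q.2.2) else 0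

/-- `R₂₃` acting on the triple tensor product. -/
def L23 (R : Matrix (Fin n × Fin n) (Fin n × Fin n) k) :
    Matrix (Fin n × Fin n × Fin n) (Fin n × Fin n × Fin n) k :=
  fun p q => if p.1 = q.1 then R (p.2.1, p.2.2) (q.2.1, q.2.2) else 0

/-- The quantum Yang–Baxter equation `R₁₂ R₁₃ R₂₃ = R₂₃ R₁₃ R₁₂`. -/
def QYBE (R : Matrix (Fin n × Fin n) (Fin n × Fin n) k) : Prop :=
  L12 R * L13 R * L23 R = L23 R * L13 R * L12 R

/-- Biinvertibility: `R` is invertible and has a second inverse `R̃` with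
`R̃ᵃᵢᵇⱼ Rʲᵇₖᶜ = δᵃₖ δᶜᵢ`. -/
def Biinvertible (R : Matrix (Fin n × Fin n) (Fin n × Fin n) k) : Prop :=
  (∃ Ri, R * Ri = 1 ∧ Ri * R = 1) ∧
  (∃ Rt : Matrix (Fin n × Fin n) (Fin n × Fin n) k, ∀ a i c kk : Fin n,
    (∑ b : Fin n, ∑ j : Fin n, Rt (a, i) (b, j) * R (j, b) (kk, c))
      = if a = kk ∧ c = i then 1 else 0)

/-- The reflection-equation (braided matrix) relation
`R₂₁ u₁ R v₂ = v₂ R₂₁ u₁ R` for matrices `u, v` with entries in a `k`-algebra `A`. -/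
def ReflRel {A : Type*} [Ring A] [Algebra k A]
    (R : Matrix (Fin n × Fin n) (Fin n × Fin n) k)
    (u v : Matrix (Fin n) (Fin n) A) : Prop :=
  mapA A (flip21 R) * leg1 u * mapA A R * leg2 v
    = leg2 v * mapA A (flip21 R) * leg1 u * mapA A R

/-- The braided tensor product (cross) relation `R⁻¹ v₁ R u₂ = u₂ R⁻¹ v₁ R`,
where `Ri` is the inverse of `R`. -/
def CrossRel {A : Type*} [Ring A] [Algebra k A]
    (Ri R : Matrix (Fin n × Fin n) (Fin n × Fin n) k)
    (v u : Matrix (Fin n) (Fin n) A) : Prop :=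
  mapA A Ri * leg1 v * mapA A R * leg2 u = leg2 u * mapA A Ri * leg1 v * mapA A R

/-! With `S = R₂₁` and `T = R` viewed as units of the matrix algebra over `A`, the reflection
equation reads `S u₁ T u₂ = u₂ S u₁ T`, and `(uv)₁ = u₁ v₁`, `(uv)₂ = u₂ v₂`. In
`S u₁ v₁ T u₂ v₂` one inserts `T T⁻¹` and uses the cross relation to pass `u₂` to the left of
`T⁻¹ v₁ T`, which exposes `S u₁ T u₂`; after the relation for `u`, inserting `S⁻¹ S` exposes
`S v₁ T v₂` for the relation for `v`, and finally `v₂` passes `u₁` by the cross relation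
transported along the flip of tensor legs, `S⁻¹ v₂ S u₁ = u₁ S⁻¹ v₂ S`. -/

theorem reflection_eq_mul_of_cross {M : Type*} [Monoid M] (S T : Mˣ) {a₁ a₂ b₁ b₂ : M}
    (ha : S * a₁ * T * a₂ = a₂ * S * a₁ * T) (hb : S * b₁ * T * b₂ = b₂ * S * b₁ * T)
    (hab : ↑T⁻¹ * b₁ * T * a₂ = a₂ * ↑T⁻¹ * b₁ * T)
    (hba : ↑S⁻¹ * b₂ * S * a₁ = a₁ * ↑S⁻¹ * b₂ * S) :
    S * (a₁ * b₁) * T * (a₂ * b₂) = a₂ * b₂ * S * (a₁ * b₁) * T :=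
  calc S * (a₁ * b₁) * T * (a₂ * b₂)
      = S * a₁ * T * (↑T⁻¹ * b₁ * T * a₂) * b₂ := by simp [mul_assoc]
    _ = S * a₁ * T * a₂ * (↑T⁻¹ * b₁ * T * b₂) := by rw [hab]; simp only [mul_assoc]
    _ = a₂ * S * a₁ * ↑S⁻¹ * (S * b₁ * T * b₂) := by rw [ha]; simp [mul_assoc]
    _ = a₂ * S * (a₁ * ↑S⁻¹ * b₂ * S) * b₁ * T := by rw [hb]; simp only [mul_assoc]
    _ = a₂ * b₂ * S * (a₁ * b₁) * T := by rw [← hba]; simp [mul_assoc]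

section

variable {A : Type*} [Ring A]

theorem leg1_mul (u v : Matrix (Fin n) (Fin n) A) : leg1 (u * v) = leg1 u * leg1 v := by
  ext p q
  simp only [leg1, Matrix.mul_apply, Fintype.sum_prod_type, mul_ite, ite_mul, zero_mul, mul_zero]
  rw [Finset.sum_comm]
  simp

theorem leg2_mul (u v : Matrix (Fin n) (Fin n) A) : leg2 (u * v) = leg2 u * leg2 v := by
  ext p q
  simp [leg2, Matrix.mul_apply, Fintype.sum_prod_type, mul_ite, ite_mul]

def swapLegs :
    Matrix (Fin n × Fin n) (Fin n × Fin n) A ≃+* Matrix (Fin n × Fin n) (Fin n × Fin n) A :=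
  Matrix.reindexRingEquiv A (Equiv.prodComm (Fin n) (Fin n))

theorem swapLegs_leg1 (u : Matrix (Fin n) (Fin n) A) : swapLegs (leg1 u) = leg2 u := rfl

theorem swapLegs_leg2 (u : Matrix (Fin n) (Fin n) A) : swapLegs (leg2 u) = leg1 u := rfl

theorem swapLegs_mapA [Algebra k A] (R : Matrix (Fin n × Fin n) (Fin n × Fin n) k) :
    swapLegs (mapA A R) = mapA A (flip21 R) := rfl

theorem CrossRel.flip [Algebra k A] {Ri R : Matrix (Fin n × Fin n) (Fin n × Fin n) k}
    {v u : Matrix (Fin n) (Fin n) A} (h : CrossRel Ri R v u) :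
    mapA A (flip21 Ri) * leg2 v * mapA A (flip21 R) * leg1 u
      = leg1 u * mapA A (flip21 Ri) * leg2 v * mapA A (flip21 R) := by
  simpa only [map_mul, swapLegs_leg1, swapLegs_leg2, swapLegs_mapA] using
    congrArg (swapLegs (A := A)) h

end

theorem braided_matrix_comul_well_defined_general
    (R : Matrix (Fin n × Fin n) (Fin n × Fin n) k)
    (Ri : Matrix (Fin n × Fin n) (Fin n × Fin n) k)
    (hRi : R * Ri = 1 ∧ Ri * R = 1)
    (A : Type*) [Ring A] [Algebra k A]
    (u v : Matrix (Fin n) (Fin n) A)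
    (hu : ReflRel R u u) (hv : ReflRel R v v)
    (hcross : CrossRel Ri R v u) :
    ReflRel R (u * v) (u * v) := by
  let T := Units.map (algebraMap k A).mapMatrix.toMonoidHom ⟨R, Ri, hRi.1, hRi.2⟩
  let S := Units.map (swapLegs (A := A)).toMonoidHom T
  rw [ReflRel, leg1_mul, leg2_mul]
  exact reflection_eq_mul_of_cross S T hu hv hcross hcross.flip

theorem braided_matrix_comul_well_defined
    (R : Matrix (Fin n × Fin n) (Fin n × Fin n) k)
    (hYB : QYBE R) (hbi : Biinvertible R)
    (Ri : Matrix (Fin n × Fin n) (Fin n × Fin n) k)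
    (hRi : R * Ri = 1 ∧ Ri * R = 1)
    (A : Type*) [Ring A] [Algebra k A]
    (u v : Matrix (Fin n) (Fin n) A)
    (hu : ReflRel R u u) (hv : ReflRel R v v)
    (hcross : CrossRel Ri R v u) :
    ReflRel R (u * v) (u * v) :=
  braided_matrix_comul_well_defined_general R Ri hRi A u v hu hv hcross
end

section
/- Let B, C be Hopf algebras over a field k and let X be a Hopf algebra that factorizes through B and C: there are Hopf algebra injections i : B → X and j : C → X such that the map B ⊗ C → X, b ⊗ c ↦ i(b) j(c), is a linear isomorphism. Then there exist unique actions ▷ : C ⊗ B → B and ◁ : C ⊗ B → C making (B, C, ▷, ◁) a matched pair, determined by j(c) i(b) = i(c₍₁₎ ▷ b₍₁₎) j(c₍₂₎ ◁ b₍₂₎), and the induced map gives a Hopf algebra isomorphism B ⋈ C ≅ X. -/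
set_option maxHeartbeats 4000000
set_option synthInstance.maxHeartbeats 400000


open TensorProduct

variable (k B C : Type*) [CommRing k] [Ring B] [HopfAlgebra k B] [Ring C] [HopfAlgebra k C]

section HopfFactorizationAux

/-- Collapse of the counit on the right leg: `(id ⊗ ε) ∘ Δ = id` (up to `rid`). -/
private lemma hf_counit_right {A : Type*} [AddCommMonoid A] [Module k A] [Coalgebra k A]
    (a : A) :
    (TensorProduct.rid k A)
      ((TensorProduct.map LinearMap.id Coalgebra.counit) (Coalgebra.comul a)) = a := by
  rw [show (TensorProduct.map LinearMap.id Coalgebra.counit : A ⊗[k] A →ₗ[k] A ⊗[k] k)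
      = LinearMap.lTensor A Coalgebra.counit from rfl, Coalgebra.lTensor_counit_comul]
  simp

/-- Collapse of the counit on the left leg: `(ε ⊗ id) ∘ Δ = id` (up to `lid`). -/
private lemma hf_counit_left {A : Type*} [AddCommMonoid A] [Module k A] [Coalgebra k A]
    (a : A) :
    (TensorProduct.lid k A)
      ((TensorProduct.map Coalgebra.counit LinearMap.id) (Coalgebra.comul a)) = a := by
  rw [show (TensorProduct.map Coalgebra.counit LinearMap.id : A ⊗[k] A →ₗ[k] k ⊗[k] A)
      = LinearMap.rTensor A Coalgebra.counit from rfl, Coalgebra.rTensor_counit_comul]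
  simp

end HopfFactorizationAux

theorem hopf_factorization
    (X : Type*) [Ring X] [HopfAlgebra k X]
    (i : B →ₐ[k] X) (j : C →ₐ[k] X)
    -- i and j are coalgebra (hence Hopf algebra) morphisms
    (hiΔ : Coalgebra.comul ∘ₗ i.toLinearMap
      = TensorProduct.map i.toLinearMap i.toLinearMap ∘ₗ Coalgebra.comul)
    (hiε : Coalgebra.counit ∘ₗ i.toLinearMap = (Coalgebra.counit : B →ₗ[k] k))
    (hjΔ : Coalgebra.comul ∘ₗ j.toLinearMap
      = TensorProduct.map j.toLinearMap j.toLinearMap ∘ₗ Coalgebra.comul)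
    (hjε : Coalgebra.counit ∘ₗ j.toLinearMap = (Coalgebra.counit : C →ₗ[k] k))
    (hi : Function.Injective i) (hj : Function.Injective j)
    -- the factorization: b ⊗ c ↦ i(b) j(c) is a linear isomorphism
    (hfact : Function.Bijective
      ((LinearMap.mul' k X) ∘ₗ TensorProduct.map i.toLinearMap j.toLinearMap)) :
    ∃! p : (C ⊗[k] B →ₗ[k] B) × (C ⊗[k] B →ₗ[k] C),
      MatchedPair k B C p.1 p.2 ∧
      -- the actions are determined by j(c) i(b) = i(c₁ ▷ b₁) j(c₂ ◁ b₂)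
      ((LinearMap.mul' k X) ∘ₗ TensorProduct.map j.toLinearMap i.toLinearMap
        = ((LinearMap.mul' k X) ∘ₗ TensorProduct.map i.toLinearMap j.toLinearMap) ∘ₗ
          (TensorProduct.map p.1 p.2) ∘ₗ
          (TensorProduct.tensorTensorTensorComm k C C B B).toLinearMap ∘ₗ
          TensorProduct.map Coalgebra.comul Coalgebra.comul) ∧
      -- b ⊗ c ↦ i(b) j(c) is an algebra map from B ⋈ C
      (((LinearMap.mul' k X) ∘ₗ TensorProduct.map i.toLinearMap j.toLinearMap) ∘ₗ
          dcpMul k B C p.1 p.2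
        = (LinearMap.mul' k X) ∘ₗ
          TensorProduct.map
            ((LinearMap.mul' k X) ∘ₗ TensorProduct.map i.toLinearMap j.toLinearMap)
            ((LinearMap.mul' k X) ∘ₗ TensorProduct.map i.toLinearMap j.toLinearMap)) ∧
      -- and a coalgebra map from the tensor coalgebra on B ⊗ C
      (Coalgebra.comul ∘ₗ
          ((LinearMap.mul' k X) ∘ₗ TensorProduct.map i.toLinearMap j.toLinearMap)
        = TensorProduct.map
            ((LinearMap.mul' k X) ∘ₗ TensorProduct.map i.toLinearMap j.toLinearMap)
            ((LinearMap.mul' k X) ∘ₗ TensorProduct.map i.toLinearMap j.toLinearMap) ∘ₗ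
          tensorComulBC k B C) ∧
      (Coalgebra.counit ∘ₗ
          ((LinearMap.mul' k X) ∘ₗ TensorProduct.map i.toLinearMap j.toLinearMap)
        = tensorCounitBC k B C) := by
  classical
  set F : B ⊗[k] C →ₗ[k] X :=
    (LinearMap.mul' k X) ∘ₗ TensorProduct.map i.toLinearMap j.toLinearMap with hFdef
  set J : C ⊗[k] B →ₗ[k] X :=
    (LinearMap.mul' k X) ∘ₗ TensorProduct.map j.toLinearMap i.toLinearMap with hJdef
  set e : (B ⊗[k] C) ≃ₗ[k] X := LinearEquiv.ofBijective F hfact with hedef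
  set Ψ : C ⊗[k] B →ₗ[k] B ⊗[k] C := e.symm.toLinearMap ∘ₗ J with hΨdef
  set ρ : B ⊗[k] C →ₗ[k] B :=
    (TensorProduct.rid k B).toLinearMap ∘ₗ TensorProduct.map LinearMap.id Coalgebra.counit
    with hρdef
  set lam : B ⊗[k] C →ₗ[k] C :=
    (TensorProduct.lid k C).toLinearMap ∘ₗ TensorProduct.map Coalgebra.counit LinearMap.id
    with hlamdef
  set lact : C ⊗[k] B →ₗ[k] B := ρ ∘ₗ Ψ with hlactdef
  set ract : C ⊗[k] B →ₗ[k] C := lam ∘ₗ Ψ with hractdef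
  set εCB : C ⊗[k] B →ₗ[k] k :=
    (TensorProduct.lid k k).toLinearMap ∘ₗ TensorProduct.map Coalgebra.counit Coalgebra.counit
    with hεCBdef
  -- pointwise basics
  have hFt : ∀ (b : B) (c : C), F (b ⊗ₜ c) = i b * j c := by
    intro b c; rw [hFdef]; simp
  have hJt : ∀ (c : C) (b : B), J (c ⊗ₜ b) = j c * i b := by
    intro c b; rw [hJdef]; simp
  have hρt : ∀ (b : B) (c : C), ρ (b ⊗ₜ c) = Coalgebra.counit (R := k) c • b := by
    intro b c; rw [hρdef]; simp
  have hlamt : ∀ (b : B) (c : C), lam (b ⊗ₜ c) = Coalgebra.counit (R := k) b • c := by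
    intro b c; rw [hlamdef]; simp
  have hεCBt : ∀ (c : C) (b : B),
      εCB (c ⊗ₜ b) = Coalgebra.counit (R := k) c * Coalgebra.counit (R := k) b := by
    intro c b; rw [hεCBdef]; simp [smul_eq_mul]
  have hεBCt : ∀ (b : B) (c : C),
      tensorCounitBC k B C (b ⊗ₜ c)
        = Coalgebra.counit (R := k) b * Coalgebra.counit (R := k) c := by
    intro b c; rw [tensorCounitBC]; simp [smul_eq_mul]
  have hΔBCt : ∀ (b : B) (c : C),
      tensorComulBC k B C (b ⊗ₜ c)
        = (TensorProduct.tensorTensorTensorComm k B B C C)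
            (Coalgebra.comul b ⊗ₜ Coalgebra.comul c) := by
    intro b c; rw [tensorComulBC]; simp
  have hsymmF : ∀ t, e.symm (F t) = t := fun t => e.symm_apply_apply t
  have hFsymm : ∀ x, F (e.symm x) = x := fun x => e.apply_symm_apply x
  have hΨapp : ∀ u, Ψ u = e.symm (J u) := fun u => rfl
  have hFΨ : ∀ u, F (Ψ u) = J u := fun u => hFsymm (J u)
  have hΨchar : ∀ (u : C ⊗[k] B) (v : B ⊗[k] C), F v = J u → Ψ u = v := by
    intro u v h; rw [hΨapp, ← h, hsymmF]
  have hlact : ∀ u, lact u = ρ (Ψ u) := fun u => rfl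
  have hract : ∀ u, ract u = lam (Ψ u) := fun u => rfl
  -- images of units under Ψ
  have hΨ1 : ∀ b : B, Ψ ((1 : C) ⊗ₜ b) = b ⊗ₜ (1 : C) := by
    intro b; apply hΨchar; rw [hFt, hJt]; simp
  have hΨ2 : ∀ c : C, Ψ (c ⊗ₜ (1 : B)) = (1 : B) ⊗ₜ c := by
    intro c; apply hΨchar; rw [hFt, hJt]; simp
  -- counit compatibility
  have h5 : Coalgebra.counit ∘ₗ F = tensorCounitBC k B C := by
    apply TensorProduct.ext'
    intro b c
    have hib := LinearMap.congr_fun hiε b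
    have hjc := LinearMap.congr_fun hjε c
    simp only [LinearMap.coe_comp, Function.comp_apply, AlgHom.toLinearMap_apply] at hib hjc ⊢
    rw [hFt, hεBCt, Bialgebra.counit_mul, hib, hjc]
  have h5' : Coalgebra.counit ∘ₗ J = εCB := by
    apply TensorProduct.ext'
    intro c b
    have hib := LinearMap.congr_fun hiε b
    have hjc := LinearMap.congr_fun hjε c
    simp only [LinearMap.coe_comp, Function.comp_apply, AlgHom.toLinearMap_apply] at hib hjc ⊢
    rw [hJt, hεCBt, Bialgebra.counit_mul, hib, hjc]
  have hεΨ : ∀ u, tensorCounitBC k B C (Ψ u) = εCB u := by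
    intro u
    have h1 := LinearMap.congr_fun h5 (Ψ u)
    have h2 := LinearMap.congr_fun h5' u
    simp only [LinearMap.coe_comp, Function.comp_apply] at h1 h2
    rw [← h1, hFΨ, h2]
  -- comultiplication compatibility
  have hS4 : ∀ (s : B ⊗[k] B) (t : C ⊗[k] C),
      (TensorProduct.map i.toLinearMap i.toLinearMap s) *
        (TensorProduct.map j.toLinearMap j.toLinearMap t)
        = TensorProduct.map F F ((TensorProduct.tensorTensorTensorComm k B B C C) (s ⊗ₜ t)) := by
    intro s t
    induction s using TensorProduct.induction_on with
    | zero => simp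
    | add u v hu hv => simp only [add_tmul, map_add, add_mul, hu, hv]
    | tmul b1 b2 =>
      induction t using TensorProduct.induction_on with
      | zero => simp
      | add u v hu hv => simp only [tmul_add, map_add, mul_add] at hu hv ⊢; rw [hu, hv]
      | tmul c1 c2 =>
        simp [Algebra.TensorProduct.tmul_mul_tmul, hFt]
  have hS4' : ∀ (t : C ⊗[k] C) (s : B ⊗[k] B),
      (TensorProduct.map j.toLinearMap j.toLinearMap t) *
        (TensorProduct.map i.toLinearMap i.toLinearMap s)
        = TensorProduct.map J J ((TensorProduct.tensorTensorTensorComm k C C B B) (t ⊗ₜ s)) := by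
    intro t s
    induction t using TensorProduct.induction_on with
    | zero => simp
    | add u v hu hv => simp only [add_tmul, map_add, add_mul, hu, hv]
    | tmul c1 c2 =>
      induction s using TensorProduct.induction_on with
      | zero => simp
      | add u v hu hv => simp only [tmul_add, map_add, mul_add] at hu hv ⊢; rw [hu, hv]
      | tmul b1 b2 =>
        simp [Algebra.TensorProduct.tmul_mul_tmul, hJt]
  have h4 : Coalgebra.comul ∘ₗ F = TensorProduct.map F F ∘ₗ tensorComulBC k B C := by
    apply TensorProduct.ext'
    intro b c
    have hib := LinearMap.congr_fun hiΔ b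
    have hjc := LinearMap.congr_fun hjΔ c
    simp only [LinearMap.coe_comp, Function.comp_apply, AlgHom.toLinearMap_apply] at hib hjc ⊢
    rw [hFt, Bialgebra.comul_mul, hib, hjc, hΔBCt]
    exact hS4 _ _
  have h4' : ∀ u, Coalgebra.comul (J u)
      = TensorProduct.map J J
          ((TensorProduct.tensorTensorTensorComm k C C B B)
            ((TensorProduct.map Coalgebra.comul Coalgebra.comul) u)) := by
    have hh : Coalgebra.comul ∘ₗ J
        = TensorProduct.map J J ∘ₗ (TensorProduct.tensorTensorTensorComm k C C B B).toLinearMap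
            ∘ₗ TensorProduct.map Coalgebra.comul Coalgebra.comul := by
      apply TensorProduct.ext'
      intro c b
      have hib := LinearMap.congr_fun hiΔ b
      have hjc := LinearMap.congr_fun hjΔ c
      simp only [LinearMap.coe_comp, Function.comp_apply, AlgHom.toLinearMap_apply,
        LinearEquiv.coe_coe, TensorProduct.map_tmul] at hib hjc ⊢
      rw [hJt, Bialgebra.comul_mul, hib, hjc]
      exact hS4' _ _
    intro u
    have h1 := LinearMap.congr_fun hh u
    simp only [LinearMap.coe_comp, Function.comp_apply, LinearEquiv.coe_coe] at h1
    exact h1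
  have hΨΔ : ∀ u, tensorComulBC k B C (Ψ u)
      = TensorProduct.map Ψ Ψ
          ((TensorProduct.tensorTensorTensorComm k C C B B)
            ((TensorProduct.map Coalgebra.comul Coalgebra.comul) u)) := by
    intro u
    have hesF : e.symm.toLinearMap ∘ₗ F = LinearMap.id := LinearMap.ext hsymmF
    have hmm : ∀ z : (B ⊗[k] C) ⊗[k] (B ⊗[k] C),
        TensorProduct.map e.symm.toLinearMap e.symm.toLinearMap
          (TensorProduct.map F F z) = z := by
      intro z
      rw [← LinearMap.comp_apply, ← TensorProduct.map_comp, hesF, TensorProduct.map_id,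
        LinearMap.id_apply]
    have h1 := LinearMap.congr_fun h4 (Ψ u)
    simp only [LinearMap.coe_comp, Function.comp_apply] at h1
    rw [hFΨ, h4' u] at h1
    calc tensorComulBC k B C (Ψ u)
        = TensorProduct.map e.symm.toLinearMap e.symm.toLinearMap
            (TensorProduct.map F F (tensorComulBC k B C (Ψ u))) := (hmm _).symm
      _ = TensorProduct.map e.symm.toLinearMap e.symm.toLinearMap
            (TensorProduct.map J J
              ((TensorProduct.tensorTensorTensorComm k C C B B)
                ((TensorProduct.map Coalgebra.comul Coalgebra.comul) u))) := by rw [← h1]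
      _ = TensorProduct.map Ψ Ψ
            ((TensorProduct.tensorTensorTensorComm k C C B B)
              ((TensorProduct.map Coalgebra.comul Coalgebra.comul) u)) := by
            rw [← LinearMap.comp_apply, ← TensorProduct.map_comp]
  -- counit identity on the tensor coalgebra B ⊗ C
  have hSA : TensorProduct.map ρ lam ∘ₗ (TensorProduct.tensorTensorTensorComm k B B C C).toLinearMap
      = TensorProduct.map
          ((TensorProduct.rid k B).toLinearMap ∘ₗ TensorProduct.map LinearMap.id Coalgebra.counit)
          ((TensorProduct.lid k C).toLinearMap ∘ₗ
            TensorProduct.map Coalgebra.counit LinearMap.id) := by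
    apply TensorProduct.ext_fourfold'
    intro b1 b2 c1 c2
    simp only [LinearMap.coe_comp, Function.comp_apply, LinearEquiv.coe_coe,
      TensorProduct.tensorTensorTensorComm_tmul, TensorProduct.map_tmul, LinearMap.id_coe,
      id_eq, TensorProduct.lid_tmul, TensorProduct.rid_tmul]
    rw [hρt, hlamt, TensorProduct.smul_tmul, TensorProduct.tmul_smul]
    simp only [← TensorProduct.smul_tmul', TensorProduct.tmul_smul, smul_smul]
  have hidBC : ∀ z : B ⊗[k] C, TensorProduct.map ρ lam (tensorComulBC k B C z) = z := by
    have hh : TensorProduct.map ρ lam ∘ₗ tensorComulBC k B C = LinearMap.id := by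
      apply TensorProduct.ext'
      intro b c
      simp only [LinearMap.coe_comp, Function.comp_apply, LinearMap.id_coe, id_eq]
      rw [hΔBCt]
      have h1 := LinearMap.congr_fun hSA (Coalgebra.comul b ⊗ₜ Coalgebra.comul c)
      simp only [LinearMap.coe_comp, Function.comp_apply, LinearEquiv.coe_coe,
        TensorProduct.map_tmul] at h1
      rw [h1, hf_counit_right k b, hf_counit_left k c]
    exact fun z => LinearMap.congr_fun hh z
  have hPsi : ∀ u, Ψ u = TensorProduct.map lact ract
      ((TensorProduct.tensorTensorTensorComm k C C B B)
        ((TensorProduct.map Coalgebra.comul Coalgebra.comul) u)) := by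
    intro u
    have h2 : TensorProduct.map lact ract
        ((TensorProduct.tensorTensorTensorComm k C C B B)
          ((TensorProduct.map Coalgebra.comul Coalgebra.comul) u))
        = TensorProduct.map ρ lam (TensorProduct.map Ψ Ψ
            ((TensorProduct.tensorTensorTensorComm k C C B B)
              ((TensorProduct.map Coalgebra.comul Coalgebra.comul) u))) := by
      rw [hlactdef, hractdef, TensorProduct.map_comp, LinearMap.comp_apply]
    rw [h2, ← hΨΔ u, hidBC]
  -- comultiplication vs the two projections
  have hqC : ∀ c : C, (TensorProduct.lid k k)
      (TensorProduct.map Coalgebra.counit Coalgebra.counit (Coalgebra.comul c))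
      = Coalgebra.counit (R := k) c := by
    intro c
    have hS : (TensorProduct.lid k k).toLinearMap ∘ₗ
        (TensorProduct.map Coalgebra.counit Coalgebra.counit : C ⊗[k] C →ₗ[k] k ⊗[k] k)
        = Coalgebra.counit ∘ₗ (TensorProduct.lid k C).toLinearMap ∘ₗ
          TensorProduct.map Coalgebra.counit LinearMap.id := by
      apply TensorProduct.ext'
      intro c1 c2
      simp [smul_eq_mul]
    have h1 := LinearMap.congr_fun hS (Coalgebra.comul c)
    simp only [LinearMap.coe_comp, Function.comp_apply, LinearEquiv.coe_coe] at h1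
    rw [h1, hf_counit_left k c]
  have hqB : ∀ b : B, (TensorProduct.lid k k)
      (TensorProduct.map Coalgebra.counit Coalgebra.counit (Coalgebra.comul b))
      = Coalgebra.counit (R := k) b := by
    intro b
    have hS : (TensorProduct.lid k k).toLinearMap ∘ₗ
        (TensorProduct.map Coalgebra.counit Coalgebra.counit : B ⊗[k] B →ₗ[k] k ⊗[k] k)
        = Coalgebra.counit ∘ₗ (TensorProduct.lid k B).toLinearMap ∘ₗ
          TensorProduct.map Coalgebra.counit LinearMap.id := by
      apply TensorProduct.ext'
      intro b1 b2
      simp [smul_eq_mul]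
    have h1 := LinearMap.congr_fun hS (Coalgebra.comul b)
    simp only [LinearMap.coe_comp, Function.comp_apply, LinearEquiv.coe_coe] at h1
    rw [h1, hf_counit_left k b]
  have hTB : ∀ t : B ⊗[k] C, Coalgebra.comul (ρ t)
      = TensorProduct.map ρ ρ (tensorComulBC k B C t) := by
    have hSB : TensorProduct.map ρ ρ ∘ₗ
        (TensorProduct.tensorTensorTensorComm k B B C C).toLinearMap
        = (TensorProduct.rid k (B ⊗[k] B)).toLinearMap ∘ₗ
          TensorProduct.map LinearMap.id
            ((TensorProduct.lid k k).toLinearMap ∘ₗ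
              TensorProduct.map Coalgebra.counit Coalgebra.counit) := by
      apply TensorProduct.ext_fourfold'
      intro b1 b2 c1 c2
      simp only [LinearMap.coe_comp, Function.comp_apply, LinearEquiv.coe_coe,
        TensorProduct.tensorTensorTensorComm_tmul, TensorProduct.map_tmul, LinearMap.id_coe,
        id_eq, TensorProduct.lid_tmul, TensorProduct.rid_tmul]
      rw [hρt, hρt]
      simp only [← TensorProduct.smul_tmul', TensorProduct.tmul_smul, smul_smul, smul_eq_mul]
      rw [mul_comm]
    have hh : Coalgebra.comul ∘ₗ ρ = TensorProduct.map ρ ρ ∘ₗ tensorComulBC k B C := by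
      apply TensorProduct.ext'
      intro b c
      simp only [LinearMap.coe_comp, Function.comp_apply]
      rw [hρt, map_smul, hΔBCt]
      have h1 := LinearMap.congr_fun hSB (Coalgebra.comul b ⊗ₜ Coalgebra.comul c)
      simp only [LinearMap.coe_comp, Function.comp_apply, LinearEquiv.coe_coe,
        TensorProduct.map_tmul, LinearMap.id_coe, id_eq, TensorProduct.rid_tmul] at h1
      rw [h1, hqC]
    exact fun t => LinearMap.congr_fun hh t
  have hTC : ∀ t : B ⊗[k] C, Coalgebra.comul (lam t)
      = TensorProduct.map lam lam (tensorComulBC k B C t) := by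
    have hSB : TensorProduct.map lam lam ∘ₗ
        (TensorProduct.tensorTensorTensorComm k B B C C).toLinearMap
        = (TensorProduct.lid k (C ⊗[k] C)).toLinearMap ∘ₗ
          TensorProduct.map
            ((TensorProduct.lid k k).toLinearMap ∘ₗ
              TensorProduct.map Coalgebra.counit Coalgebra.counit) LinearMap.id := by
      apply TensorProduct.ext_fourfold'
      intro b1 b2 c1 c2
      simp only [LinearMap.coe_comp, Function.comp_apply, LinearEquiv.coe_coe,
        TensorProduct.tensorTensorTensorComm_tmul, TensorProduct.map_tmul, LinearMap.id_coe,
        id_eq, TensorProduct.lid_tmul]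
      rw [hlamt, hlamt]
      simp only [← TensorProduct.smul_tmul', TensorProduct.tmul_smul, smul_smul, smul_eq_mul]
      rw [mul_comm]
    have hh : Coalgebra.comul ∘ₗ lam = TensorProduct.map lam lam ∘ₗ tensorComulBC k B C := by
      apply TensorProduct.ext'
      intro b c
      simp only [LinearMap.coe_comp, Function.comp_apply]
      rw [hlamt, map_smul, hΔBCt]
      have h1 := LinearMap.congr_fun hSB (Coalgebra.comul b ⊗ₜ Coalgebra.comul c)
      simp only [LinearMap.coe_comp, Function.comp_apply, LinearEquiv.coe_coe,
        TensorProduct.map_tmul, LinearMap.id_coe, id_eq, TensorProduct.lid_tmul] at h1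
      rw [h1, hqB]
    exact fun t => LinearMap.congr_fun hh t
  have hswap : ∀ z : B ⊗[k] C,
      TensorProduct.map lam ρ (tensorComulBC k B C z) = (TensorProduct.comm k B C) z := by
    have hSswap : TensorProduct.map lam ρ ∘ₗ
        (TensorProduct.tensorTensorTensorComm k B B C C).toLinearMap
        = (TensorProduct.map
            ((TensorProduct.rid k C).toLinearMap ∘ₗ TensorProduct.map LinearMap.id Coalgebra.counit)
            ((TensorProduct.lid k B).toLinearMap ∘ₗ TensorProduct.map Coalgebra.counit LinearMap.id))
          ∘ₗ (TensorProduct.comm k (B ⊗[k] B) (C ⊗[k] C)).toLinearMap := by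
      apply TensorProduct.ext_fourfold'
      intro b1 b2 c1 c2
      simp only [LinearMap.coe_comp, Function.comp_apply, LinearEquiv.coe_coe,
        TensorProduct.tensorTensorTensorComm_tmul, TensorProduct.map_tmul, LinearMap.id_coe,
        id_eq, TensorProduct.lid_tmul, TensorProduct.rid_tmul, TensorProduct.comm_tmul]
      rw [hlamt, hρt]
      simp only [← TensorProduct.smul_tmul', TensorProduct.tmul_smul, smul_smul, smul_eq_mul,
        mul_comm]
    have hh : TensorProduct.map lam ρ ∘ₗ tensorComulBC k B C
        = (TensorProduct.comm k B C).toLinearMap := by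
      apply TensorProduct.ext'
      intro b c
      simp only [LinearMap.coe_comp, Function.comp_apply, LinearEquiv.coe_coe,
        TensorProduct.comm_tmul]
      rw [hΔBCt]
      have h1 := LinearMap.congr_fun hSswap (Coalgebra.comul b ⊗ₜ Coalgebra.comul c)
      simp only [LinearMap.coe_comp, Function.comp_apply, LinearEquiv.coe_coe,
        TensorProduct.map_tmul, TensorProduct.comm_tmul] at h1
      rw [h1, hf_counit_right k c, hf_counit_left k b]
    exact fun z => LinearMap.congr_fun hh z
  have hScomm : ∀ z : (C ⊗[k] B) ⊗[k] (C ⊗[k] B),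
      TensorProduct.map ract lact ((TensorProduct.comm k (C ⊗[k] B) (C ⊗[k] B)) z)
        = (TensorProduct.comm k B C) (TensorProduct.map lact ract z) := by
    intro z
    induction z using TensorProduct.induction_on with
    | zero => simp
    | add u v hu hv => simp only [map_add, hu, hv]
    | tmul u v => simp only [TensorProduct.comm_tmul, TensorProduct.map_tmul]
  -- multiplication lemmas
  have he : ∀ z, e z = F z := fun _ => rfl
  have hRmul : ∀ (s : B ⊗[k] C) (y : C),
      e.symm (F s * j y) = TensorProduct.map LinearMap.id (LinearMap.mulRight k y) s := by
    intro s y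
    rw [LinearEquiv.symm_apply_eq, he]
    induction s using TensorProduct.induction_on with
    | zero => simp
    | add u v hu hv => simp only [map_add, add_mul, hu, hv]
    | tmul x z =>
      simp only [TensorProduct.map_tmul, LinearMap.id_coe, id_eq, LinearMap.mulRight_apply]
      rw [hFt, hFt, map_mul, mul_assoc]
  have hLmul : ∀ (s : B ⊗[k] C) (x : B),
      e.symm (i x * F s) = TensorProduct.map (LinearMap.mulLeft k x) LinearMap.id s := by
    intro s x
    rw [LinearEquiv.symm_apply_eq, he]
    induction s using TensorProduct.induction_on with
    | zero => simp
    | add u v hu hv => simp only [map_add, mul_add, hu, hv]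
    | tmul b z =>
      simp only [TensorProduct.map_tmul, LinearMap.id_coe, id_eq, LinearMap.mulLeft_apply]
      rw [hFt, hFt, map_mul, mul_assoc]
  have hSmr2 : ∀ (y : C) (s : B ⊗[k] C),
      ρ (TensorProduct.map LinearMap.id (LinearMap.mulRight k y) s)
        = Coalgebra.counit (R := k) y • ρ s := by
    intro y s
    induction s using TensorProduct.induction_on with
    | zero => simp
    | add u v hu hv => simp only [map_add, hu, hv, smul_add]
    | tmul b z =>
      simp only [TensorProduct.map_tmul, LinearMap.id_coe, id_eq, LinearMap.mulRight_apply]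
      rw [hρt, hρt, Bialgebra.counit_mul, smul_smul, mul_comm]
  have hSml2 : ∀ (x : B) (s : B ⊗[k] C),
      lam (TensorProduct.map (LinearMap.mulLeft k x) LinearMap.id s)
        = Coalgebra.counit (R := k) x • lam s := by
    intro x s
    induction s using TensorProduct.induction_on with
    | zero => simp
    | add u v hu hv => simp only [map_add, hu, hv, smul_add]
    | tmul b z =>
      simp only [TensorProduct.map_tmul, LinearMap.id_coe, id_eq, LinearMap.mulLeft_apply]
      rw [hlamt, hlamt, Bialgebra.counit_mul, smul_smul]
  have hSmlB : ∀ (x : B) (s : B ⊗[k] C),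
      ρ (TensorProduct.map (LinearMap.mulLeft k x) LinearMap.id s) = x * ρ s := by
    intro x s
    induction s using TensorProduct.induction_on with
    | zero => simp
    | add u v hu hv => simp only [map_add, hu, hv, mul_add]
    | tmul b z =>
      simp only [TensorProduct.map_tmul, LinearMap.id_coe, id_eq, LinearMap.mulLeft_apply]
      rw [hρt, hρt, mul_smul_comm]
  have hSmrC : ∀ (y : C) (s : B ⊗[k] C),
      lam (TensorProduct.map LinearMap.id (LinearMap.mulRight k y) s) = lam s * y := by
    intro y s
    induction s using TensorProduct.induction_on with
    | zero => simp
    | add u v hu hv => simp only [map_add, hu, hv, add_mul]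
    | tmul b z =>
      simp only [TensorProduct.map_tmul, LinearMap.id_coe, id_eq, LinearMap.mulRight_apply]
      rw [hlamt, hlamt, smul_mul_assoc]
  have hM1 : ∀ (c c' : C) (b : B),
      Ψ ((c * c') ⊗ₜ b) = e.symm (j c * F (Ψ (c' ⊗ₜ b))) := by
    intro c c' b
    rw [hΨapp, hJt, map_mul j c c', mul_assoc (j c) (j c') (i b), hFΨ, hJt]
  have hM2 : ∀ (c : C) (b b' : B),
      Ψ (c ⊗ₜ (b * b')) = e.symm (F (Ψ (c ⊗ₜ b)) * i b') := by
    intro c b b'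
    rw [hΨapp, hJt, map_mul i b b', ← mul_assoc (j c) (i b) (i b'), hFΨ, hJt]
  have hLρ : ∀ (c : C) (t : B ⊗[k] C),
      ρ (e.symm (j c * F t)) = lact (c ⊗ₜ ρ t) := by
    intro c t
    induction t using TensorProduct.induction_on with
    | zero => simp
    | add u v hu hv => simp only [map_add, mul_add, TensorProduct.tmul_add, hu, hv]
    | tmul b'' c'' =>
      rw [hFt, ← mul_assoc, ← hJt, ← hFΨ, hRmul, hSmr2, hρt, TensorProduct.tmul_smul,
        map_smul, ← hlact]
  have hLlam : ∀ (t : B ⊗[k] C) (b' : B),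
      lam (e.symm (F t * i b')) = ract (lam t ⊗ₜ b') := by
    intro t b'
    induction t using TensorProduct.induction_on with
    | zero => simp
    | add u v hu hv => simp only [map_add, add_mul, TensorProduct.add_tmul, hu, hv]
    | tmul b'' c'' =>
      rw [hFt, mul_assoc, ← hJt, ← hFΨ, hLmul, hSml2, hlamt, ← TensorProduct.smul_tmul',
        map_smul, ← hract]
  have hLρ2 : ∀ (t : B ⊗[k] C) (b' : B),
      ρ (e.symm (F t * i b'))
        = LinearMap.mul' k B (TensorProduct.map LinearMap.id lact
            ((TensorProduct.assoc k B C B) (t ⊗ₜ b'))) := by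
    intro t b'
    induction t using TensorProduct.induction_on with
    | zero => simp
    | add u v hu hv => simp only [map_add, add_mul, TensorProduct.add_tmul, hu, hv]
    | tmul x y =>
      rw [hFt, mul_assoc, ← hJt, ← hFΨ, hLmul, hSmlB]
      simp only [TensorProduct.assoc_tmul, TensorProduct.map_tmul, LinearMap.id_coe, id_eq,
        LinearMap.mul'_apply, hlact]
  have hLlam2 : ∀ (c : C) (t : B ⊗[k] C),
      lam (e.symm (j c * F t))
        = LinearMap.mul' k C (TensorProduct.map ract LinearMap.id
            ((TensorProduct.assoc k C B C).symm (c ⊗ₜ t))) := by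
    intro c t
    induction t using TensorProduct.induction_on with
    | zero => simp
    | add u v hu hv => simp only [map_add, mul_add, TensorProduct.tmul_add, hu, hv]
    | tmul x y =>
      rw [hFt, ← mul_assoc, ← hJt, ← hFΨ, hRmul, hSmrC]
      simp only [TensorProduct.assoc_symm_tmul, TensorProduct.map_tmul, LinearMap.id_coe, id_eq,
        LinearMap.mul'_apply, hract]
  have hLD : ∀ (b : B) (c' : C) (s : B ⊗[k] C),
      F (TensorProduct.map (LinearMap.mul' k B) (LinearMap.mul' k C)
          ((TensorProduct.assoc k B B (C ⊗[k] C)).symm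
            (b ⊗ₜ ((TensorProduct.assoc k B C C) (s ⊗ₜ c')))))
        = i b * F s * j c' := by
    intro b c' s
    induction s using TensorProduct.induction_on with
    | zero => simp
    | add u v hu hv =>
      simp only [TensorProduct.add_tmul, TensorProduct.tmul_add, map_add, add_mul, mul_add,
        hu, hv]
    | tmul x y =>
      simp only [TensorProduct.assoc_tmul, TensorProduct.assoc_symm_tmul,
        TensorProduct.map_tmul, LinearMap.mul'_apply]
      rw [hFt, hFt, map_mul, map_mul]
      simp only [mul_assoc]
  -- counit of the actions
  have hSe1 : ∀ t : B ⊗[k] C, Coalgebra.counit (ρ t) = tensorCounitBC k B C t := by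
    have hh : Coalgebra.counit ∘ₗ ρ = tensorCounitBC k B C := by
      apply TensorProduct.ext'
      intro b c
      simp only [LinearMap.coe_comp, Function.comp_apply]
      rw [hρt, map_smul, hεBCt, smul_eq_mul, mul_comm]
    exact fun t => LinearMap.congr_fun hh t
  have hSe2 : ∀ t : B ⊗[k] C, Coalgebra.counit (lam t) = tensorCounitBC k B C t := by
    have hh : Coalgebra.counit ∘ₗ lam = tensorCounitBC k B C := by
      apply TensorProduct.ext'
      intro b c
      simp only [LinearMap.coe_comp, Function.comp_apply]
      rw [hlamt, map_smul, hεBCt, smul_eq_mul]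
    exact fun t => LinearMap.congr_fun hh t
  -- the matched pair axioms
  have hMP : MatchedPair k B C lact ract := by
    constructor
    · -- lact_one
      intro b
      rw [hlact, hΨ1, hρt, Bialgebra.counit_one, one_smul]
    · -- lact_act
      apply TensorProduct.ext_threefold
      intro c c' b
      simp only [LinearMap.coe_comp, Function.comp_apply, TensorProduct.map_tmul,
        LinearMap.id_coe, id_eq, LinearMap.mul'_apply, LinearEquiv.coe_coe,
        TensorProduct.assoc_tmul]
      rw [hlact ((c * c') ⊗ₜ b), hM1, hLρ, ← hlact]
    · -- lact_comul
      apply TensorProduct.ext'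
      intro c b
      simp only [LinearMap.coe_comp, Function.comp_apply, LinearEquiv.coe_coe,
        TensorProduct.map_tmul]
      have h1 := hΨΔ (c ⊗ₜ b)
      simp only [TensorProduct.map_tmul] at h1
      rw [hlact, hTB, h1, ← LinearMap.comp_apply, ← TensorProduct.map_comp, ← hlactdef]
    · -- lact_counit
      apply TensorProduct.ext'
      intro c b
      simp only [LinearMap.coe_comp, Function.comp_apply, LinearEquiv.coe_coe,
        TensorProduct.map_tmul, TensorProduct.lid_tmul]
      rw [hlact, hSe1, hεΨ, hεCBt, smul_eq_mul]
    · -- lact_triv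
      intro c
      rw [hlact, hΨ2, hρt]
    · -- ract_one
      intro c
      rw [hract, hΨ2, hlamt, Bialgebra.counit_one, one_smul]
    · -- ract_act
      ext c b b'
      simp only [LinearMap.coe_comp, Function.comp_apply, TensorProduct.map_tmul,
        LinearMap.id_coe, id_eq, LinearMap.mul'_apply, LinearEquiv.coe_coe,
        TensorProduct.assoc_symm_tmul, TensorProduct.AlgebraTensorModule.curry_apply,
        TensorProduct.curry_apply, LinearMap.coe_restrictScalars]
      rw [hract (c ⊗ₜ (b * b')), hM2, hLlam, ← hract]
    · -- ract_comul
      apply TensorProduct.ext'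
      intro c b
      simp only [LinearMap.coe_comp, Function.comp_apply, LinearEquiv.coe_coe,
        TensorProduct.map_tmul]
      have h1 := hΨΔ (c ⊗ₜ b)
      simp only [TensorProduct.map_tmul] at h1
      rw [hract, hTC, h1, ← LinearMap.comp_apply, ← TensorProduct.map_comp, ← hractdef]
    · -- ract_counit
      apply TensorProduct.ext'
      intro c b
      simp only [LinearMap.coe_comp, Function.comp_apply, LinearEquiv.coe_coe,
        TensorProduct.map_tmul, TensorProduct.lid_tmul]
      rw [hract, hSe2, hεΨ, hεCBt, smul_eq_mul]
    · -- ract_triv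
      intro b
      rw [hract, hΨ1, hlamt]
    · -- comp_left
      ext c b b'
      simp only [LinearMap.coe_comp, Function.comp_apply, TensorProduct.map_tmul,
        LinearMap.id_coe, id_eq, LinearMap.mul'_apply, LinearEquiv.coe_coe,
        TensorProduct.assoc_tmul, TensorProduct.assoc_symm_tmul,
        TensorProduct.AlgebraTensorModule.curry_apply,
        TensorProduct.curry_apply, LinearMap.coe_restrictScalars]
      rw [hlact (c ⊗ₜ (b * b')), hM2, hLρ2]
      have hu := hPsi (c ⊗ₜ b)
      simp only [TensorProduct.map_tmul] at hu
      rw [hu]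
      generalize (TensorProduct.tensorTensorTensorComm k C C B B)
        (Coalgebra.comul c ⊗ₜ Coalgebra.comul b) = S
      induction S using TensorProduct.induction_on with
      | zero => simp
      | tmul u v =>
        simp only [TensorProduct.map_tmul, TensorProduct.assoc_tmul, LinearMap.id_coe, id_eq,
          LinearMap.mul'_apply, LinearMap.coe_comp, Function.comp_apply]
      | add u v hu' hv' =>
        simp only [map_add, TensorProduct.add_tmul, hu', hv']
    · -- comp_right
      apply TensorProduct.ext_threefold
      intro c c' b
      simp only [LinearMap.coe_comp, Function.comp_apply, TensorProduct.map_tmul,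
        LinearMap.id_coe, id_eq, LinearMap.mul'_apply, LinearEquiv.coe_coe,
        TensorProduct.assoc_tmul]
      rw [hract ((c * c') ⊗ₜ b), hM1, hLlam2]
      have hu := hPsi (c' ⊗ₜ b)
      simp only [TensorProduct.map_tmul] at hu
      rw [hu]
    · -- comp_mid
      apply TensorProduct.ext'
      intro c b
      simp only [LinearMap.coe_comp, Function.comp_apply, LinearEquiv.coe_coe,
        TensorProduct.map_tmul]
      have hu := hPsi (c ⊗ₜ b)
      simp only [TensorProduct.map_tmul] at hu
      have h1 := hΨΔ (c ⊗ₜ b)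
      simp only [TensorProduct.map_tmul] at h1
      have hL : TensorProduct.map ract lact
          ((TensorProduct.tensorTensorTensorComm k C C B B)
            (Coalgebra.comul c ⊗ₜ Coalgebra.comul b))
          = (TensorProduct.comm k B C) (Ψ (c ⊗ₜ b)) := by
        rw [hractdef, hlactdef, TensorProduct.map_comp, LinearMap.comp_apply, ← h1]
        exact hswap _
      rw [hL, hScomm, ← hu]
  -- the determination clause
  have hdet : J = F ∘ₗ TensorProduct.map lact ract ∘ₗ
      (TensorProduct.tensorTensorTensorComm k C C B B).toLinearMap ∘ₗ
      TensorProduct.map Coalgebra.comul Coalgebra.comul := by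
    apply LinearMap.ext
    intro u
    simp only [LinearMap.coe_comp, Function.comp_apply, LinearEquiv.coe_coe]
    rw [← hPsi u, hFΨ]
  -- the algebra map clause
  have halg : F ∘ₗ dcpMul k B C lact ract = LinearMap.mul' k X ∘ₗ TensorProduct.map F F := by
    apply TensorProduct.ext_fourfold'
    intro b c b' c'
    simp only [dcpMul, LinearMap.coe_comp, Function.comp_apply, LinearEquiv.coe_coe,
      TensorProduct.map_tmul, LinearMap.id_coe, id_eq, TensorProduct.assoc_tmul,
      TensorProduct.assoc_symm_tmul, LinearMap.mul'_apply]
    have hu := hPsi (c ⊗ₜ b')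
    simp only [TensorProduct.map_tmul] at hu
    rw [← hu, hLD, hFΨ, hJt, hFt, hFt]
    simp only [mul_assoc]
  refine ⟨(lact, ract), ⟨hMP, hdet, halg, h4, h5⟩, ?_⟩
  rintro ⟨q1, q2⟩ ⟨hq0, hdq0, -, -, -⟩
  have hq : MatchedPair k B C q1 q2 := hq0
  have hdq : J = F ∘ₗ TensorProduct.map q1 q2 ∘ₗ
      (TensorProduct.tensorTensorTensorComm k C C B B).toLinearMap ∘ₗ
      TensorProduct.map Coalgebra.comul Coalgebra.comul := hdq0
  have hΨq : ∀ u, Ψ u = TensorProduct.map q1 q2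
      ((TensorProduct.tensorTensorTensorComm k C C B B)
        ((TensorProduct.map Coalgebra.comul Coalgebra.comul) u)) := by
    intro u
    have h1 := LinearMap.congr_fun hdq u
    simp only [LinearMap.coe_comp, Function.comp_apply, LinearEquiv.coe_coe] at h1
    rw [hΨapp, h1, hsymmF]
  have hq1 : q1 = lact := by
    have hKq : ∀ z : (C ⊗[k] B) ⊗[k] (C ⊗[k] B),
        ρ (TensorProduct.map q1 q2 z)
          = q1 ((TensorProduct.rid k (C ⊗[k] B))
              (TensorProduct.map LinearMap.id εCB z)) := by
      have hh : ρ ∘ₗ TensorProduct.map q1 q2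
          = q1 ∘ₗ (TensorProduct.rid k (C ⊗[k] B)).toLinearMap ∘ₗ
            TensorProduct.map LinearMap.id εCB := by
        apply TensorProduct.ext'
        intro v w
        have hcw := LinearMap.congr_fun hq.ract_counit w
        simp only [LinearMap.coe_comp, Function.comp_apply, LinearEquiv.coe_coe] at hcw
        simp only [LinearMap.coe_comp, Function.comp_apply, LinearEquiv.coe_coe,
          TensorProduct.map_tmul, LinearMap.id_coe, id_eq, TensorProduct.rid_tmul, map_smul]
        rw [hρt, hcw, hεCBdef]
        simp only [LinearMap.coe_comp, Function.comp_apply, LinearEquiv.coe_coe]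
      exact fun z => LinearMap.congr_fun hh z
    have hcolS : (TensorProduct.rid k (C ⊗[k] B)).toLinearMap ∘ₗ
        TensorProduct.map LinearMap.id εCB ∘ₗ
        (TensorProduct.tensorTensorTensorComm k C C B B).toLinearMap
        = TensorProduct.map
            ((TensorProduct.rid k C).toLinearMap ∘ₗ
              TensorProduct.map LinearMap.id Coalgebra.counit)
            ((TensorProduct.rid k B).toLinearMap ∘ₗ
              TensorProduct.map LinearMap.id Coalgebra.counit) := by
      apply TensorProduct.ext_fourfold'
      intro c1 c2 b1 b2
      simp only [LinearMap.coe_comp, Function.comp_apply, LinearEquiv.coe_coe,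
        TensorProduct.tensorTensorTensorComm_tmul, TensorProduct.map_tmul, LinearMap.id_coe,
        id_eq, TensorProduct.rid_tmul]
      rw [hεCBt]
      simp only [← TensorProduct.smul_tmul', TensorProduct.tmul_smul, smul_smul, smul_eq_mul]
      rw [mul_comm]
    apply TensorProduct.ext'
    intro c b
    have h1 := hΨq (c ⊗ₜ b)
    simp only [TensorProduct.map_tmul] at h1
    have h2 := LinearMap.congr_fun hcolS (Coalgebra.comul c ⊗ₜ Coalgebra.comul b)
    simp only [LinearMap.coe_comp, Function.comp_apply, LinearEquiv.coe_coe,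
      TensorProduct.map_tmul] at h2
    calc q1 (c ⊗ₜ b)
        = q1 ((TensorProduct.rid k (C ⊗[k] B)) (TensorProduct.map LinearMap.id εCB
            ((TensorProduct.tensorTensorTensorComm k C C B B)
              (Coalgebra.comul c ⊗ₜ Coalgebra.comul b)))) := by
          rw [h2, hf_counit_right k c, hf_counit_right k b]
      _ = ρ (TensorProduct.map q1 q2 ((TensorProduct.tensorTensorTensorComm k C C B B)
            (Coalgebra.comul c ⊗ₜ Coalgebra.comul b))) := (hKq _).symm
      _ = ρ (Ψ (c ⊗ₜ b)) := by rw [← h1]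
      _ = lact (c ⊗ₜ b) := (hlact _).symm
  have hq2 : q2 = ract := by
    have hKq : ∀ z : (C ⊗[k] B) ⊗[k] (C ⊗[k] B),
        lam (TensorProduct.map q1 q2 z)
          = q2 ((TensorProduct.lid k (C ⊗[k] B))
              (TensorProduct.map εCB LinearMap.id z)) := by
      have hh : lam ∘ₗ TensorProduct.map q1 q2
          = q2 ∘ₗ (TensorProduct.lid k (C ⊗[k] B)).toLinearMap ∘ₗ
            TensorProduct.map εCB LinearMap.id := by
        apply TensorProduct.ext'
        intro v w
        have hcv := LinearMap.congr_fun hq.lact_counit v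
        simp only [LinearMap.coe_comp, Function.comp_apply, LinearEquiv.coe_coe] at hcv
        simp only [LinearMap.coe_comp, Function.comp_apply, LinearEquiv.coe_coe,
          TensorProduct.map_tmul, LinearMap.id_coe, id_eq, TensorProduct.lid_tmul, map_smul]
        rw [hlamt, hcv, hεCBdef]
        simp only [LinearMap.coe_comp, Function.comp_apply, LinearEquiv.coe_coe]
      exact fun z => LinearMap.congr_fun hh z
    have hcolS : (TensorProduct.lid k (C ⊗[k] B)).toLinearMap ∘ₗ
        TensorProduct.map εCB LinearMap.id ∘ₗ
        (TensorProduct.tensorTensorTensorComm k C C B B).toLinearMap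
        = TensorProduct.map
            ((TensorProduct.lid k C).toLinearMap ∘ₗ
              TensorProduct.map Coalgebra.counit LinearMap.id)
            ((TensorProduct.lid k B).toLinearMap ∘ₗ
              TensorProduct.map Coalgebra.counit LinearMap.id) := by
      apply TensorProduct.ext_fourfold'
      intro c1 c2 b1 b2
      simp only [LinearMap.coe_comp, Function.comp_apply, LinearEquiv.coe_coe,
        TensorProduct.tensorTensorTensorComm_tmul, TensorProduct.map_tmul, LinearMap.id_coe,
        id_eq, TensorProduct.lid_tmul]
      rw [hεCBt]
      simp only [← TensorProduct.smul_tmul', TensorProduct.tmul_smul, smul_smul, smul_eq_mul]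
      rw [mul_comm]
    apply TensorProduct.ext'
    intro c b
    have h1 := hΨq (c ⊗ₜ b)
    simp only [TensorProduct.map_tmul] at h1
    have h2 := LinearMap.congr_fun hcolS (Coalgebra.comul c ⊗ₜ Coalgebra.comul b)
    simp only [LinearMap.coe_comp, Function.comp_apply, LinearEquiv.coe_coe,
      TensorProduct.map_tmul] at h2
    calc q2 (c ⊗ₜ b)
        = q2 ((TensorProduct.lid k (C ⊗[k] B)) (TensorProduct.map εCB LinearMap.id
            ((TensorProduct.tensorTensorTensorComm k C C B B)
              (Coalgebra.comul c ⊗ₜ Coalgebra.comul b)))) := by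
          rw [h2, hf_counit_left k c, hf_counit_left k b]
      _ = lam (TensorProduct.map q1 q2 ((TensorProduct.tensorTensorTensorComm k C C B B)
            (Coalgebra.comul c ⊗ₜ Coalgebra.comul b))) := (hKq _).symm
      _ = lam (Ψ (c ⊗ₜ b)) := by rw [← h1]
      _ = ract (c ⊗ₜ b) := (hract _).symm
  rw [hq1, hq2]
end
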